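/- Midpoint decomposition (content of the midpoint lemma): let M be a nondeterministic finite automaton over Σ with state set σ. For all strings x¹, x² ∈ Σ*, d(x¹x², L(M)) = inf over states q ∈ σ of ( d(x¹, L₁(q)) + d(x², L₂(q)) ), where L₁(q) is the set of strings y such that M can reach state q from some initial state reading y, L₂(q) is the set of strings y such that M can reach some accepting state from q reading y, d(x, L) = inf_{y ∈ L} d(x, y), and all infima are taken in [0, ∞] (with the infimum over the empty set equal to ∞). -/

import Mathlib

open scoped ENNReal NNReal

/-- An edit operation over alphabet `α`: a pair in `(Σ ∪ {ε}) × (Σ ∪ {ε})`,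
where `none` plays the role of `ε`.  The pair `(none, none)` is excluded
from `Ω` via the validity condition in `IsAlignment`. -/
abbrev EditOp (α : Type*) := Option α × Option α

/-- `ω` is an alignment between `x` and `y`: every letter of `ω` lies in
`Ω = (Σ ∪ {ε}) × (Σ ∪ {ε}) − {(ε,ε)}`, and the natural morphism `h`
(erasing `ε`'s componentwise) sends `ω` to `(x, y)`. -/
def IsAlignment {α : Type*} (ω : List (EditOp α)) (x y : List α) : Prop :=
  (∀ p ∈ ω, p ≠ (none, none)) ∧
    ω.filterMap Prod.fst = x ∧ ω.filterMap Prod.snd = y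

/-- The cost `c(ω) = Σᵢ c(ωᵢ)` of an alignment. -/
def alignCost {α : Type*} (c : EditOp α → ℝ≥0) (ω : List (EditOp α)) : ℝ≥0 :=
  (ω.map c).sum

/-- The edit-distance `d(x, y)`: the minimal cost of an alignment between
`x` and `y`. -/
noncomputable def editDist {α : Type*} (c : EditOp α → ℝ≥0) (x y : List α) : ℝ≥0 :=
  sInf {r : ℝ≥0 | ∃ ω : List (EditOp α), IsAlignment ω x y ∧ alignCost c ω = r}

/-- The edit distance `d(x, L) = inf_{y ∈ L} d(x, y)` between a string and a
language, taken in `[0, ∞]` (so `d(x, ∅) = ∞`). -/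
noncomputable def langDist {α : Type*} (c : EditOp α → ℝ≥0) (x : List α)
    (L : Set (List α)) : ℝ≥0∞ :=
  ⨅ y ∈ L, (editDist c x y : ℝ≥0∞)

/-!
Cutting an alignment of `x₁ x₂` with `y` right after the last operation that reads `x₁` cuts `y`
as `y₁ y₂` and splits the cost between an alignment of `x₁` with `y₁` and one of `x₂` with `y₂`;
conversely two such alignments concatenate. Hence `d(x₁ x₂, L)` is the infimum of
`d(x₁, y₁) + d(x₂, y₂)` over all `y₁ y₂ ∈ L`. For `L = L(M)`, a word `y₁ y₂` is accepted exactly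
when some state `q` is reached by `y₁` and leads to acceptance on `y₂`, so this infimum runs over
`q` and then independently over `y₁ ∈ L₁(q)` and `y₂ ∈ L₂(q)`.
-/

section

variable {α : Type*} (c : EditOp α → ℝ≥0)

namespace IsAlignment

variable {ω ω₁ ω₂ : List (EditOp α)} {x₁ x₂ y y₁ y₂ : List α}

theorem append (h₁ : IsAlignment ω₁ x₁ y₁) (h₂ : IsAlignment ω₂ x₂ y₂) :
    IsAlignment (ω₁ ++ ω₂) (x₁ ++ x₂) (y₁ ++ y₂) := by
  obtain ⟨valid₁, fst₁, snd₁⟩ := h₁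
  obtain ⟨valid₂, fst₂, snd₂⟩ := h₂
  refine ⟨fun p hp => (List.mem_append.1 hp).elim (valid₁ p) (valid₂ p), ?_, ?_⟩
  · rw [List.filterMap_append, fst₁, fst₂]
  · rw [List.filterMap_append, snd₁, snd₂]

theorem exists_split (h : IsAlignment ω (x₁ ++ x₂) y) :
    ∃ ω₁ ω₂ y₁ y₂, ω = ω₁ ++ ω₂ ∧ y = y₁ ++ y₂ ∧
      IsAlignment ω₁ x₁ y₁ ∧ IsAlignment ω₂ x₂ y₂ := by
  obtain ⟨valid, fst, rfl⟩ := h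
  obtain ⟨ω₁, ω₂, rfl, fst₁, fst₂⟩ := List.filterMap_eq_append_iff.1 fst
  refine ⟨ω₁, ω₂, _, _, rfl, List.filterMap_append, ?_, ?_⟩
  · exact ⟨fun p hp => valid p (List.mem_append_left _ hp), fst₁, rfl⟩
  · exact ⟨fun p hp => valid p (List.mem_append_right _ hp), fst₂, rfl⟩

end IsAlignment

theorem exists_isAlignment (x y : List α) : ∃ ω, IsAlignment ω x y := by
  refine ⟨x.map (fun a => (some a, none)) ++ y.map (fun b => (none, some b)), ?_, ?_, ?_⟩
  · simp only [List.mem_append, List.mem_map]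
    rintro _ (⟨a, -, rfl⟩ | ⟨b, -, rfl⟩) <;> simp
  · simp [List.filterMap_append, List.filterMap_map]
  · simp [List.filterMap_append, List.filterMap_map]

theorem editDist_le_alignCost {ω : List (EditOp α)} {x y : List α} (h : IsAlignment ω x y) :
    editDist c x y ≤ alignCost c ω :=
  csInf_le (OrderBot.bddBelow _) ⟨ω, h, rfl⟩

theorem alignCost_append (ω₁ ω₂ : List (EditOp α)) :
    alignCost c (ω₁ ++ ω₂) = alignCost c ω₁ + alignCost c ω₂ := by
  simp [alignCost]

theorem coe_editDist (x y : List α) :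
    (editDist c x y : ℝ≥0∞) = ⨅ (ω) (_ : IsAlignment ω x y), (alignCost c ω : ℝ≥0∞) := by
  obtain ⟨ω, hω⟩ := exists_isAlignment x y
  have hcosts : {r | ∃ ω, IsAlignment ω x y ∧ alignCost c ω = r} =
      alignCost c '' {ω | IsAlignment ω x y} := by
    ext; simp [eq_comm]
  rw [editDist, hcosts, ENNReal.coe_sInf (Set.Nonempty.image _ ⟨ω, hω⟩), iInf_image]
  rfl

theorem coe_editDist_append_le (x₁ x₂ y₁ y₂ : List α) :
    (editDist c (x₁ ++ x₂) (y₁ ++ y₂) : ℝ≥0∞) ≤ editDist c x₁ y₁ + editDist c x₂ y₂ := by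
  simp only [coe_editDist, ENNReal.iInf_add, ENNReal.add_iInf]
  refine le_iInf₂ fun ω₂ h₂ => le_iInf₂ fun ω₁ h₁ => ?_
  exact iInf₂_le_of_le _ (h₁.append h₂) (by rw [alignCost_append, ENNReal.coe_add])

theorem langDist_append (x₁ x₂ : List α) (L : Set (List α)) :
    langDist c (x₁ ++ x₂) L =
      ⨅ (y₁) (y₂) (_ : y₁ ++ y₂ ∈ L), (editDist c x₁ y₁ + editDist c x₂ y₂ : ℝ≥0∞) := by
  refine le_antisymm (le_iInf fun y₁ => le_iInf₂ fun y₂ hy => ?_) (le_iInf₂ fun y hy => ?_)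
  · exact (biInf_le _ hy).trans (coe_editDist_append_le c x₁ x₂ y₁ y₂)
  · rw [coe_editDist]
    refine le_iInf₂ fun ω hω => ?_
    obtain ⟨ω₁, ω₂, y₁, y₂, rfl, rfl, h₁, h₂⟩ := hω.exists_split
    calc ⨅ (y₁) (y₂) (_ : y₁ ++ y₂ ∈ L), (editDist c x₁ y₁ + editDist c x₂ y₂ : ℝ≥0∞)
        ≤ editDist c x₁ y₁ + editDist c x₂ y₂ := iInf₂_le_of_le y₁ y₂ (iInf_le _ hy)
      _ ≤ alignCost c ω₁ + alignCost c ω₂ := by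
        gcongr <;> exact editDist_le_alignCost c ‹_›
      _ = alignCost c (ω₁ ++ ω₂) := by rw [alignCost_append, ENNReal.coe_add]

theorem langDist_append_of_append_mem_iff {ι : Sort*} (x₁ x₂ : List α) {L : Set (List α)}
    {A B : ι → Set (List α)} (hL : ∀ y₁ y₂, y₁ ++ y₂ ∈ L ↔ ∃ i, y₁ ∈ A i ∧ y₂ ∈ B i) :
    langDist c (x₁ ++ x₂) L = ⨅ i, (langDist c x₁ (A i) + langDist c x₂ (B i)) := by
  rw [langDist_append]
  simp only [hL, langDist, ENNReal.iInf_add, ENNReal.add_iInf, iInf_exists, iInf_and]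
  refine le_antisymm (le_iInf fun i => le_iInf₂ fun y₂ h₂ => le_iInf₂ fun y₁ h₁ => ?_)
    (le_iInf fun y₁ => le_iInf fun y₂ => le_iInf fun i => le_iInf₂ fun h₁ h₂ => ?_)
  · exact iInf₂_le_of_le y₁ y₂ (iInf_le_of_le i (iInf₂_le h₁ h₂))
  · exact iInf_le_of_le i (iInf₂_le_of_le y₂ h₂ (iInf₂_le y₁ h₁))

theorem NFA.append_mem_accepts_iff {σ : Type*} (M : NFA α σ) {y₁ y₂ : List α} :
    y₁ ++ y₂ ∈ M.accepts ↔ ∃ q, q ∈ M.eval y₁ ∧ y₂ ∈ M.acceptsFrom {q} := by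
  rw [accepts_eq_acceptsFrom_start, append_mem_acceptsFrom, mem_acceptsFrom]
  simp_rw [mem_evalFrom_iff_exists (S := M.evalFrom _ _), mem_acceptsFrom]
  exact ⟨fun ⟨f, hf, q, hq, h⟩ => ⟨q, hq, f, hf, h⟩, fun ⟨q, hq, f, hf, h⟩ => ⟨f, hf, q, hq, h⟩⟩

end

theorem langDist_midpoint_general {α σ : Type*}
    (M : NFA α σ) (c : EditOp α → ℝ≥0) (x₁ x₂ : List α) :
    langDist c (x₁ ++ x₂) M.accepts =
      ⨅ q : σ,
        (langDist c x₁ {y : List α | q ∈ M.eval y} +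
         langDist c x₂ {y : List α | ∃ f ∈ M.accept, f ∈ M.evalFrom {q} y}) :=
  langDist_append_of_append_mem_iff c x₁ x₂ fun _ _ => M.append_mem_accepts_iff

/-- midpoint decomposition: for all strings `x¹, x²`,
`d(x¹x², L(M)) = inf_{q ∈ σ} ( d(x¹, L₁(q)) + d(x², L₂(q)) )`, where
`L₁(q)` is the set of strings by which `M` can reach `q` from an initial
state and `L₂(q)` the set of strings by which `M` can reach an accepting
state from `q`; all infima are taken in `[0, ∞]`. -/
theorem langDist_midpoint {α σ : Type*} [Fintype α] [Fintype σ]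
    (M : NFA α σ) (c : EditOp α → ℝ≥0) (x₁ x₂ : List α) :
    langDist c (x₁ ++ x₂) M.accepts =
      ⨅ q : σ,
        (langDist c x₁ {y : List α | q ∈ M.eval y} +
         langDist c x₂ {y : List α | ∃ f ∈ M.accept, f ∈ M.evalFrom {q} y}) :=
  langDist_midpoint_general M c x₁ x₂
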